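/- arXiv:1604.06341 — 2 statements merged into one kernel-verified Lean document; each statement's English description precedes it below -/
import Mathlib

section
/- Let D be a real Banach space equipped with a partial order making it an Archimedean ordered vector space whose positive cone D⁺ = {x ∈ D : 0 ≤ x} is generating (D = D⁺ − D⁺). Then the following are equivalent: (1) D⁺ is closed; (2) the norm is absolutely dominating (there exists C > 0 with C·‖x‖ ≥ inf { ‖a‖ : a ∈ D⁺, −a ≤ x ≤ a } for all x) and for every sequence a₁, a₂, … ∈ D⁺ with ∑ₙ ‖aₙ‖ < ∞ there exist a ∈ D⁺ and εₙ > 0 with εₙ → 0 and aₙ ≤ εₙ·a for all n; (3) every sequence x₁, x₂, … ∈ D with ∑ₙ ‖xₙ‖ < ∞ converges uniformly to 0, i.e., there exist a ∈ D⁺ and εₙ > 0 with εₙ → 0 such that −εₙ·a ≤ xₙ ≤ εₙ·a for all n. -/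
/-!
(1) ⇒ (2) is Andô's theorem plus a summation trick. Say `x` is dominated by `a ≥ 0` if
`-a ≤ x ≤ a`. The elements dominated by some `a` with `‖a‖ ≤ n` form convex symmetric sets which
cover `D` because the cone is generating, so by Baire the closure of one of them contains a ball
about `0`. By homogeneity every `u` is then approximately dominated by an element of norm at most
`K‖u‖`, and, as in the proof of the open mapping theorem, summing a geometric sequence of such
approximations yields an exact domination; closedness of the cone lets the order inequalities
pass to the limit. A norm-summable positive sequence `(aₙ)` is dominated by `b = ∑ εₙ⁻¹ aₙ`,
where `εₙ → 0` slowly enough that `∑ ‖aₙ‖ / εₙ < ∞`: square roots of the tails of `∑ ‖aₙ‖` do.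

(2) ⇒ (3): dominate `xₙ` by some `aₙ ≥ 0` with `‖aₙ‖ ≤ C‖xₙ‖ + 2⁻ⁿ` and apply (2) to `(aₙ)`.

(3) ⇒ (1): if `yₖ ≥ 0` converges to `x` fast enough, then `-x ≤ yₖ - x ≤ εₖ b` with `εₖ → 0`,
and the Archimedean property gives `-x ≤ 0`.
-/

open Filter Topology Set Metric

theorem sub_div_sqrt_le_two_mul_sqrt_sub {p q : ℝ} (hp : 0 < p) (hq : 0 ≤ q) (hqp : q ≤ p) :
    (p - q) / √p ≤ 2 * (√p - √q) := by
  rw [div_le_iff₀ (Real.sqrt_pos.2 hp)]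
  nlinarith [Real.sq_sqrt hp.le, Real.sq_sqrt hq, Real.sqrt_le_sqrt hqp, Real.sqrt_nonneg q]

theorem exists_tendsto_zero_summable_div_of_pos {c : ℕ → ℝ} (hc : ∀ n, 0 < c n)
    (hs : Summable c) :
    ∃ ε : ℕ → ℝ, (∀ n, 0 < ε n) ∧ Tendsto ε atTop (𝓝 0) ∧ Summable fun n => c n / ε n := by
  set t : ℕ → ℝ := fun n => ∑' m, c (m + n)
  have ht_succ : ∀ n, t n = c n + t (n + 1) := fun n => by
    simpa [t, add_assoc, add_comm 1 n] using ((summable_nat_add_iff n).2 hs).tsum_eq_zero_add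
  have ht_nonneg : ∀ n, 0 ≤ t n := fun n => tsum_nonneg fun m => (hc (m + n)).le
  have ht_pos : ∀ n, 0 < t n := fun n => by linarith [ht_succ n, hc n, ht_nonneg (n + 1)]
  refine ⟨fun n => √(t n), fun n => Real.sqrt_pos.2 (ht_pos n),
    by simpa using (tendsto_sum_nat_add c).sqrt, ?_⟩
  have hdiff : ∀ n, c n / √(t n) ≤ 2 * (√(t n) - √(t (n + 1))) := fun n => by
    simpa [ht_succ n] using sub_div_sqrt_le_two_mul_sqrt_sub (ht_pos n) (ht_nonneg (n + 1))
      (by linarith [ht_succ n, hc n])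
  have hanti : ∀ n, √(t (n + 1)) ≤ √(t n) := fun n =>
    Real.sqrt_le_sqrt (by linarith [ht_succ n, hc n])
  have htele : Summable fun n => 2 * (√(t n) - √(t (n + 1))) :=
    summable_of_sum_range_le (c := 2 * √(t 0)) (fun n => by linarith [hanti n]) fun n => by
      rw [← Finset.mul_sum, Finset.sum_range_sub' (fun n => √(t n))]
      linarith [Real.sqrt_nonneg (t n)]
  exact htele.of_nonneg_of_le (fun n => div_nonneg (hc n).le (Real.sqrt_nonneg _)) hdiff

theorem exists_tendsto_zero_summable_div {c : ℕ → ℝ} (hc : ∀ n, 0 ≤ c n) (hs : Summable c) :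
    ∃ ε : ℕ → ℝ, (∀ n, 0 < ε n) ∧ Tendsto ε atTop (𝓝 0) ∧ Summable fun n => c n / ε n := by
  -- adding `2⁻ⁿ` makes all terms, hence all tails, positive
  obtain ⟨ε, hε, hε0, hsum⟩ := exists_tendsto_zero_summable_div_of_pos
    (c := fun n => c n + (1 / 2) ^ n) (fun n => add_pos_of_nonneg_of_pos (hc n) (by positivity))
    (hs.add summable_geometric_two)
  refine ⟨ε, hε, hε0, hsum.of_nonneg_of_le (fun n => div_nonneg (hc n) (hε n).le) fun n => ?_⟩
  gcongr
  · exact (hε n).le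
  · exact le_add_of_nonneg_right (by positivity)

theorem ball_zero_subset_of_ball_subset {F : Type*} [SeminormedAddCommGroup F] [NormedSpace ℝ F]
    {s : Set F} (hconv : Convex ℝ s) (hneg : ∀ x ∈ s, -x ∈ s) {x₀ : F} {r : ℝ}
    (h : ball x₀ r ⊆ s) : ball 0 r ⊆ s := by
  intro u hu
  rw [mem_ball_zero_iff] at hu
  have h₁ : x₀ + u ∈ s := h (by simpa [dist_eq_norm] using hu)
  have h₂ : -(x₀ - u) ∈ s := hneg _ (h (by simpa [dist_eq_norm] using hu))
  convert hconv h₁ h₂ (by norm_num : (0 : ℝ) ≤ 1 / 2) (by norm_num : (0 : ℝ) ≤ 1 / 2)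
    (by norm_num) using 1
  module

section OrderedNormedSpace

variable {E : Type*} [NormedAddCommGroup E] [PartialOrder E]

def dominatedBall (r : ℝ) : Set E := {x | ∃ a, 0 ≤ a ∧ ‖a‖ ≤ r ∧ x ∈ Icc (-a) a}

def dominatingNorms (x : E) : Set ℝ := {r | ∃ a : E, 0 ≤ a ∧ -a ≤ x ∧ x ≤ a ∧ r = ‖a‖}

variable (E) in
def IsAbsolutelyDominating : Prop :=
  ∃ C : ℝ, 0 < C ∧ ∀ x : E, sInf (dominatingNorms x) ≤ C * ‖x‖

def IsUniformlyDominated [NormedSpace ℝ E] (a : ℕ → E) : Prop :=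
  ∃ b : E, 0 ≤ b ∧ ∃ ε : ℕ → ℝ, (∀ n, 0 < ε n) ∧ Tendsto ε atTop (𝓝 0) ∧ ∀ n, a n ≤ ε n • b

def ConvergesUniformlyToZero [NormedSpace ℝ E] (x : ℕ → E) : Prop :=
  ∃ b : E, 0 ≤ b ∧ ∃ ε : ℕ → ℝ, (∀ n, 0 < ε n) ∧ Tendsto ε atTop (𝓝 0) ∧
    ∀ n, x n ∈ Icc (-(ε n • b)) (ε n • b)

theorem dominatedBall_mono {r s : ℝ} (hrs : r ≤ s) : dominatedBall r ⊆ (dominatedBall s : Set E) :=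
  fun _ ⟨a, ha, har, hxa⟩ => ⟨a, ha, har.trans hrs, hxa⟩

theorem zero_mem_dominatedBall {r : ℝ} (hr : 0 ≤ r) : (0 : E) ∈ dominatedBall r :=
  ⟨0, le_rfl, by simpa using hr, by simp⟩

theorem sInf_dominatingNorms_le {x : E} {r : ℝ} (hx : x ∈ dominatedBall r) :
    sInf (dominatingNorms x) ≤ r := by
  obtain ⟨a, ha, har, hxa⟩ := hx
  refine (csInf_le (s := dominatingNorms x) ⟨0, ?_⟩ ⟨a, ha, hxa.1, hxa.2, rfl⟩).trans har
  rintro _ ⟨b, -, -, -, rfl⟩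
  exact norm_nonneg b

theorem smul_mem_dominatedBall [NormedSpace ℝ E] [PosSMulMono ℝ E] {c r : ℝ} {x : E} (hc : 0 ≤ c)
    (hx : x ∈ dominatedBall r) : c • x ∈ dominatedBall (c * r) := by
  obtain ⟨a, ha, har, hxa⟩ := hx
  refine ⟨c • a, smul_nonneg hc ha, ?_, ?_, smul_le_smul_of_nonneg_left hxa.2 hc⟩
  · rw [norm_smul, Real.norm_of_nonneg hc]
    exact mul_le_mul_of_nonneg_left har hc
  · rw [← smul_neg]
    exact smul_le_smul_of_nonneg_left hxa.1 hc

theorem mem_closure_dominatedBall_of_ball_subset [NormedSpace ℝ E] [PosSMulMono ℝ E] {r s : ℝ}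
    (hr : 0 < r) (h : ball (0 : E) r ⊆ closure (dominatedBall s)) (u : E) :
    u ∈ closure (dominatedBall (2 * s / r * ‖u‖)) := by
  rcases eq_or_ne u 0 with rfl | hu
  · simpa using subset_closure (zero_mem_dominatedBall (E := E) le_rfl)
  have hc : 0 < 2 * ‖u‖ / r := by positivity
  have hu' : (2 * ‖u‖ / r)⁻¹ • u ∈ closure (dominatedBall s) := h <| by
    rw [mem_ball_zero_iff, norm_smul, norm_inv, Real.norm_of_nonneg hc.le]
    field_simp
    linarith
  have := map_mem_closure (continuous_const_smul _) hu' fun v hv => smul_mem_dominatedBall hc.le hv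
  rwa [smul_inv_smul₀ hc.ne', show 2 * ‖u‖ / r * s = 2 * s / r * ‖u‖ by ring] at this

variable [IsOrderedAddMonoid E]

theorem sub_mem_Icc_neg_add {y z : E} (hy : 0 ≤ y) (hz : 0 ≤ z) :
    y - z ∈ Icc (-(y + z)) (y + z) := by
  rw [neg_add, sub_eq_add_neg]
  exact ⟨add_le_add_left (neg_le_self hy) _, add_le_add_right (neg_le_self hz) _⟩

theorem neg_mem_dominatedBall {r : ℝ} {x : E} (hx : x ∈ dominatedBall r) :
    -x ∈ dominatedBall r := by
  obtain ⟨a, ha, har, hxa⟩ := hx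
  exact ⟨a, ha, har, neg_le_neg hxa.2, by simpa using neg_le_neg hxa.1⟩

theorem add_mem_dominatedBall {r s : ℝ} {x y : E} (hx : x ∈ dominatedBall r)
    (hy : y ∈ dominatedBall s) : x + y ∈ dominatedBall (r + s) := by
  obtain ⟨a, ha, har, hxa⟩ := hx
  obtain ⟨b, hb, hbs, hyb⟩ := hy
  refine ⟨a + b, add_nonneg ha hb, (norm_add_le a b).trans (add_le_add har hbs), ?_, ?_⟩
  · rw [neg_add]
    exact add_le_add hxa.1 hyb.1
  · exact add_le_add hxa.2 hyb.2

theorem exists_nat_mem_dominatedBall {x : E} (hx : ∃ y z : E, 0 ≤ y ∧ 0 ≤ z ∧ x = y - z) :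
    ∃ n : ℕ, x ∈ dominatedBall n := by
  obtain ⟨y, z, hy, hz, rfl⟩ := hx
  exact ⟨⌈‖y + z‖⌉₊, y + z, add_nonneg hy hz, Nat.le_ceil _, sub_mem_Icc_neg_add hy hz⟩

theorem mem_dominatedBall_of_sInf_dominatingNorms_le {x : E}
    (hx : ∃ y z : E, 0 ≤ y ∧ 0 ≤ z ∧ x = y - z) {r δ : ℝ} (h : sInf (dominatingNorms x) ≤ r)
    (hδ : 0 < δ) : x ∈ dominatedBall (r + δ) := by
  obtain ⟨y, z, hy, hz, rfl⟩ := hx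
  have hyz := sub_mem_Icc_neg_add hy hz
  obtain ⟨_, ⟨a, ha, hxa₁, hxa₂, rfl⟩, hlt⟩ :=
    Real.lt_sInf_add_pos (s := dominatingNorms (y - z))
      ⟨_, y + z, add_nonneg hy hz, hyz.1, hyz.2, rfl⟩ hδ
  exact ⟨a, ha, by linarith, hxa₁, hxa₂⟩

theorem IsUniformlyDominated.convergesUniformlyToZero_of_mem_Icc [NormedSpace ℝ E] {a x : ℕ → E}
    (ha : IsUniformlyDominated a) (hx : ∀ n, x n ∈ Icc (-a n) (a n)) :
    ConvergesUniformlyToZero x := by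
  obtain ⟨b, hb, ε, hε, hε0, hab⟩ := ha
  exact ⟨b, hb, ε, hε, hε0, fun n => Icc_subset_Icc (neg_le_neg (hab n)) (hab n) (hx n)⟩

theorem convergesUniformlyToZero_of_summable_norm [NormedSpace ℝ E]
    (hgen : ∀ x : E, ∃ y z : E, 0 ≤ y ∧ 0 ≤ z ∧ x = y - z) (hdom : IsAbsolutelyDominating E)
    (hpos : ∀ a : ℕ → E, (∀ n, 0 ≤ a n) → (Summable fun n => ‖a n‖) → IsUniformlyDominated a)
    {x : ℕ → E} (hx : Summable fun n => ‖x n‖) : ConvergesUniformlyToZero x := by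
  obtain ⟨C, -, hC⟩ := hdom
  have hmem : ∀ n, x n ∈ dominatedBall (C * ‖x n‖ + (1 / 2) ^ n) := fun n =>
    mem_dominatedBall_of_sInf_dominatingNorms_le (hgen (x n)) (hC (x n)) (by positivity)
  choose a ha har hxa using hmem
  have ha_sum : Summable fun n => ‖a n‖ :=
    ((hx.mul_left C).add summable_geometric_two).of_nonneg_of_le (fun n => norm_nonneg _) har
  exact (hpos a ha ha_sum).convergesUniformlyToZero_of_mem_Icc hxa

theorem tsum_mem_dominatedBall [CompleteSpace E] [OrderClosedTopology E] {ι : Type*} {v : ι → E}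
    {r : ι → ℝ} (hv : Summable v) (hr : Summable r) (hvr : ∀ k, v k ∈ dominatedBall (r k)) :
    ∑' k, v k ∈ dominatedBall (∑' k, r k) := by
  choose a ha har hva using hvr
  have ha_norm : Summable fun k => ‖a k‖ := hr.of_nonneg_of_le (fun k => norm_nonneg _) har
  refine ⟨∑' k, a k, tsum_nonneg ha, (norm_tsum_le_tsum_norm ha_norm).trans
    (ha_norm.tsum_le_tsum har hr), ?_, hv.tsum_le_tsum (fun k => (hva k).2) ha_norm.of_norm⟩
  rw [← tsum_neg]
  exact ha_norm.of_norm.neg.tsum_le_tsum (fun k => (hva k).1) hv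

theorem mem_dominatedBall_of_forall_mem_closure [CompleteSpace E] [OrderClosedTopology E]
    {K : ℝ} (hK : 0 ≤ K) (h : ∀ u : E, u ∈ closure (dominatedBall (K * ‖u‖))) (x : E) :
    x ∈ dominatedBall (2 * K * ‖x‖) := by
  rcases eq_or_ne x 0 with rfl | hx
  · simpa using zero_mem_dominatedBall (E := E) le_rfl
  have hstep : ∀ (k : ℕ) (u : E), ∃ v ∈ dominatedBall (K * ‖u‖),
      dist u v < ‖x‖ * (1 / 2) ^ (k + 1) := fun k u =>
    Metric.mem_closure_iff.1 (h u) _ (by positivity)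
  choose V hV hUV using hstep
  -- `U k` is the error left after `k` approximation steps; the steps `V k (U k)` sum to `x`.
  let U : ℕ → E := fun k => Nat.rec x (fun k u => u - V k u) k
  have hU : ∀ k, ‖U k‖ ≤ ‖x‖ * (1 / 2) ^ k := fun k => by
    cases k with
    | zero => simp [U]
    | succ k => simpa [U, dist_eq_norm] using (hUV k (U k)).le
  have hU_sum : Summable U :=
    Summable.of_norm_bounded (summable_geometric_two.mul_left ‖x‖) hU
  have hV_sum : HasSum (fun k => V k (U k)) x := by
    have := hU_sum.hasSum.sub ((summable_nat_add_iff 1).2 hU_sum).hasSum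
    rw [hU_sum.tsum_eq_zero_add, add_sub_cancel_right] at this
    convert this using 1
    · funext k
      exact (sub_sub_cancel (U k) (V k (U k))).symm
    · rfl
  have := tsum_mem_dominatedBall hV_sum.summable (summable_geometric_two.mul_left (K * ‖x‖))
    fun k => dominatedBall_mono (by simpa [mul_assoc] using mul_le_mul_of_nonneg_left (hU k) hK)
      (hV k (U k))
  rwa [hV_sum.tsum_eq, tsum_mul_left, tsum_geometric_two, mul_comm (K * ‖x‖), ← mul_assoc] at this

variable [NormedSpace ℝ E] [PosSMulMono ℝ E]

theorem convex_dominatedBall (r : ℝ) : Convex ℝ (dominatedBall r : Set E) := by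
  intro x hx y hy s t hs ht hst
  have := add_mem_dominatedBall (smul_mem_dominatedBall hs hx) (smul_mem_dominatedBall ht hy)
  rwa [← add_mul, hst, one_mul] at this

theorem nonpos_of_forall_le_smul (harch : ∀ a b : E, (∀ n : ℕ, n • a ≤ b) → a ≤ 0) {y b : E}
    (hb : 0 ≤ b) {ε : ℕ → ℝ} (hε : Tendsto ε atTop (𝓝 0)) (hy : ∀ k, y ≤ ε k • b) : y ≤ 0 := by
  refine harch y b fun n => ?_
  obtain ⟨k, hk⟩ := ((hε.const_mul (n : ℝ)).eventually
    (gt_mem_nhds (by simp : (n : ℝ) * 0 < 1))).exists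
  calc n • y = (n : ℝ) • y := (Nat.cast_smul_eq_nsmul ℝ n y).symm
    _ ≤ (n : ℝ) • ε k • b := smul_le_smul_of_nonneg_left (hy k) n.cast_nonneg
    _ = ((n : ℝ) * ε k) • b := smul_smul _ _ _
    _ ≤ (1 : ℝ) • b := smul_le_smul_of_nonneg_right hk.le hb
    _ = b := one_smul ℝ b

theorem isClosed_nonneg_of_forall_convergesUniformlyToZero
    (harch : ∀ a b : E, (∀ n : ℕ, n • a ≤ b) → a ≤ 0)
    (h : ∀ x : ℕ → E, (Summable fun n => ‖x n‖) → ConvergesUniformlyToZero x) :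
    IsClosed {x : E | 0 ≤ x} := by
  refine closure_subset_iff_isClosed.1 fun x hx => ?_
  have hseq : ∀ k : ℕ, ∃ y : E, 0 ≤ y ∧ dist x y < (1 / 2) ^ k := fun k =>
    Metric.mem_closure_iff.1 hx _ (by positivity)
  choose y hy hxy using hseq
  have hsum : Summable fun k => ‖y k - x‖ :=
    summable_geometric_two.of_nonneg_of_le (fun k => norm_nonneg _) fun k => by
      rw [← dist_eq_norm, dist_comm]
      exact (hxy k).le
  obtain ⟨b, hb, ε, -, hε0, hyb⟩ := h _ hsum
  refine neg_nonpos.1 (nonpos_of_forall_le_smul harch hb hε0 fun k => ?_)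
  calc -x ≤ y k - x := by simpa [sub_eq_neg_add] using add_le_add_right (hy k) (-x)
    _ ≤ ε k • b := (hyb k).2

variable [CompleteSpace E]

theorem exists_ball_subset_closure_dominatedBall
    (hgen : ∀ x : E, ∃ y z : E, 0 ≤ y ∧ 0 ≤ z ∧ x = y - z) :
    ∃ n : ℕ, ∃ r > 0, ball (0 : E) r ⊆ closure (dominatedBall n) := by
  have hcover : ⋃ n : ℕ, closure (dominatedBall n : Set E) = univ :=
    eq_univ_of_forall fun x =>
      mem_iUnion.2 ((exists_nat_mem_dominatedBall (hgen x)).imp fun _ hn => subset_closure hn)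
  obtain ⟨n, x₀, hx₀⟩ := nonempty_interior_of_iUnion_of_closed (fun _ => isClosed_closure) hcover
  obtain ⟨r, hr, hball⟩ := Metric.isOpen_iff.1 isOpen_interior x₀ hx₀
  refine ⟨n, r, hr, ball_zero_subset_of_ball_subset (convex_dominatedBall _).closure
    (fun x hx => ?_) (hball.trans interior_subset)⟩
  exact map_mem_closure continuous_neg hx fun _ => neg_mem_dominatedBall

variable [OrderClosedTopology E]

theorem isAbsolutelyDominating_of_generating
    (hgen : ∀ x : E, ∃ y z : E, 0 ≤ y ∧ 0 ≤ z ∧ x = y - z) : IsAbsolutelyDominating E := by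
  obtain ⟨n, r, hr, hball⟩ := exists_ball_subset_closure_dominatedBall hgen
  have hK : 0 ≤ 2 * n / r := by positivity
  refine ⟨2 * (2 * n / r) + 1, by positivity, fun x => sInf_dominatingNorms_le ?_⟩
  refine dominatedBall_mono ?_ (mem_dominatedBall_of_forall_mem_closure hK
    (mem_closure_dominatedBall_of_ball_subset hr hball) x)
  nlinarith [norm_nonneg x]

theorem isUniformlyDominated_of_summable_norm {a : ℕ → E} (ha : ∀ n, 0 ≤ a n)
    (hs : Summable fun n => ‖a n‖) : IsUniformlyDominated a := by
  obtain ⟨ε, hε, hε0, hsum⟩ := exists_tendsto_zero_summable_div (fun n => norm_nonneg (a n)) hs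
  have hterm : ∀ n, 0 ≤ (ε n)⁻¹ • a n := fun n => smul_nonneg (inv_nonneg.2 (hε n).le) (ha n)
  have hb : Summable fun n => (ε n)⁻¹ • a n := Summable.of_norm <| hsum.congr fun n => by
    rw [norm_smul, norm_inv, Real.norm_of_nonneg (hε n).le, inv_mul_eq_div]
  refine ⟨∑' n, (ε n)⁻¹ • a n, tsum_nonneg hterm, ε, hε, hε0, fun n => ?_⟩
  calc a n = ε n • (ε n)⁻¹ • a n := (smul_inv_smul₀ (hε n).ne' _).symm
    _ ≤ ε n • ∑' m, (ε m)⁻¹ • a m :=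
      smul_le_smul_of_nonneg_left (hb.le_tsum n fun m _ => hterm m) (hε n).le

end OrderedNormedSpace

/-- For an Archimedean directed ordered Banach space `D` the following are equivalent:
(1) the positive cone is closed;
(2) the norm is absolutely dominating and every norm-summable sequence of positive
    elements is uniformly dominated;
(3) every norm-summable sequence converges uniformly to `0`. -/
theorem closed_cone_equivalences
    {D : Type*} [NormedAddCommGroup D] [NormedSpace ℝ D] [CompleteSpace D]
    [PartialOrder D] [CovariantClass D D (· + ·) (· ≤ ·)]
    (hsmul : ∀ (c : ℝ) (x : D), 0 ≤ c → 0 ≤ x → 0 ≤ c • x)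
    (harch : ∀ a b : D, (∀ n : ℕ, n • a ≤ b) → a ≤ 0)
    (hgen : ∀ x : D, ∃ y z : D, 0 ≤ y ∧ 0 ≤ z ∧ x = y - z) :
    (IsClosed {x : D | 0 ≤ x} ↔
      ((∃ C : ℝ, 0 < C ∧ ∀ x : D,
          sInf {r : ℝ | ∃ a : D, 0 ≤ a ∧ -a ≤ x ∧ x ≤ a ∧ r = ‖a‖} ≤ C * ‖x‖) ∧
        ∀ a : ℕ → D, (∀ n, 0 ≤ a n) → (Summable fun n => ‖a n‖) →
          ∃ b : D, 0 ≤ b ∧ ∃ ε : ℕ → ℝ, (∀ n, 0 < ε n) ∧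
            Tendsto ε atTop (nhds 0) ∧ ∀ n, a n ≤ ε n • b)) ∧
    (IsClosed {x : D | 0 ≤ x} ↔
      ∀ x : ℕ → D, (Summable fun n => ‖x n‖) →
        ∃ b : D, 0 ≤ b ∧ ∃ ε : ℕ → ℝ, (∀ n, 0 < ε n) ∧
          Tendsto ε atTop (nhds 0) ∧ ∀ n, -(ε n • b) ≤ x n ∧ x n ≤ ε n • b) := by
  have : IsOrderedAddMonoid D :=
    { add_le_add_left := fun _ _ h c => add_le_add_left h c }
  have : PosSMulMono ℝ D := PosSMulMono.of_smul_nonneg fun c hc x hx => hsmul c x hc hx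
  have closed_imp_two (hc : IsClosed {x : D | 0 ≤ x}) : IsAbsolutelyDominating D ∧
      ∀ a : ℕ → D, (∀ n, 0 ≤ a n) → (Summable fun n => ‖a n‖) → IsUniformlyDominated a :=
    have : OrderClosedTopology D := ⟨isClosed_le_of_isClosed_nonneg hc⟩
    ⟨isAbsolutelyDominating_of_generating hgen, fun _ => isUniformlyDominated_of_summable_norm⟩
  have two_imp_three (h : IsAbsolutelyDominating D ∧
      ∀ a : ℕ → D, (∀ n, 0 ≤ a n) → (Summable fun n => ‖a n‖) → IsUniformlyDominated a)
      (x : ℕ → D) (hx : Summable fun n => ‖x n‖) : ConvergesUniformlyToZero x :=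
    convergesUniformlyToZero_of_summable_norm hgen h.1 h.2 hx
  have three_imp_closed := isClosed_nonneg_of_forall_convergesUniformlyToZero harch
  exact ⟨⟨closed_imp_two, three_imp_closed ∘ two_imp_three⟩,
    ⟨two_imp_three ∘ closed_imp_two, three_imp_closed⟩⟩
end

section
/- Let D₁ be a real Banach space equipped with a partial order making it an ordered vector space with closed generating positive cone D₁⁺ = {x : 0 ≤ x}. Let D₂ be a real normed space equipped with a partial order making it an ordered vector space whose positive cone is normal, i.e., there exists c > 0 such that 0 ≤ x ≤ y implies ‖x‖ ≤ c·‖y‖. Let T : D₁ → D₂ be a linear order bounded map (T maps every order interval [u, v] into some order interval of D₂). Then T is continuous. -/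
/-!
On the positive cone `T` is bounded: otherwise there are `uₙ ≥ 0` with `‖uₙ‖ ≤ 2⁻ⁿ` and
`‖T uₙ‖ > n`; their sum `s` exists by completeness and dominates every `uₙ` because the cone is
closed, so `T` maps `[0, s]` into an order interval, which normality makes norm bounded.
Ando's theorem then writes every `x` as `y - z` with `y, z ≥ 0` and `‖y‖, ‖z‖ ≤ M ‖x‖`: by Baire
category the closure of some `{y - z : y, z ≥ 0, ‖y‖, ‖z‖ ≤ ρ}` contains a ball around `0` (the set
is convex and symmetric), and, as in the proof of the open mapping theorem, approximating successive
remainders turns this into an exact decomposition with bound `2ρ`.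
-/

open Set Metric Filter Topology

lemma OrderClosedTopology.of_isClosed_nonneg {E : Type*} [AddCommGroup E] [PartialOrder E]
    [IsOrderedAddMonoid E] [TopologicalSpace E] [ContinuousSub E]
    (h : IsClosed {x : E | 0 ≤ x}) : OrderClosedTopology E where
  isClosed_le' := by
    simpa only [preimage_ofPred_eq, sub_nonneg] using
      h.preimage (f := fun p : E × E => p.2 - p.1) (by fun_prop)

theorem isBounded_Icc_of_normal_cone {E : Type*} [NormedAddCommGroup E]
    [PartialOrder E] [IsOrderedAddMonoid E] {c : ℝ}
    (hc : ∀ x y : E, 0 ≤ x → x ≤ y → ‖x‖ ≤ c * ‖y‖) (p q : E) :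
    Bornology.IsBounded (Icc p q) := by
  refine isBounded_iff_forall_norm_le.2 ⟨c * ‖q - p‖ + ‖p‖, fun x hx => ?_⟩
  calc ‖x‖ = ‖(x - p) + p‖ := by rw [sub_add_cancel]
    _ ≤ ‖x - p‖ + ‖p‖ := norm_add_le _ _
    _ ≤ c * ‖q - p‖ + ‖p‖ := by
        gcongr
        exact hc _ _ (sub_nonneg.2 hx.1) (sub_le_sub_right hx.2 p)

section OrderedBanachSpace

variable {D : Type*} [NormedAddCommGroup D] [PartialOrder D]

section BoundedOnCone

variable [NormedSpace ℝ D] [PosSMulMono ℝ D] {F : Type*} [SeminormedAddCommGroup F]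
  [NormedSpace ℝ F]

lemma exists_nonneg_norm_le_lt_norm_apply (f : D →ₗ[ℝ] F)
    (hf : ∀ C, 0 ≤ C → ∃ x, 0 ≤ x ∧ C * ‖x‖ < ‖f x‖) {ε : ℝ} (hε : 0 < ε) (R : ℝ) :
    ∃ u, 0 ≤ u ∧ ‖u‖ ≤ ε ∧ R < ‖f u‖ := by
  obtain ⟨x, hx0, hx⟩ := hf ((|R| + 1) / ε) (by positivity)
  have hxpos : 0 < ‖x‖ := norm_pos_iff.2 fun h0 => by simp [h0] at hx
  refine ⟨(ε / ‖x‖) • x, smul_nonneg (by positivity) hx0, ?_, ?_⟩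
  · rw [norm_smul, Real.norm_of_nonneg (by positivity), div_mul_cancel₀ _ hxpos.ne']
  · rw [map_smul, norm_smul, Real.norm_of_nonneg (by positivity)]
    calc R < |R| + 1 := (le_abs_self R).trans_lt (lt_add_one _)
      _ = ε / ‖x‖ * ((|R| + 1) / ε * ‖x‖) := by field_simp
      _ < ε / ‖x‖ * ‖f x‖ := by gcongr

theorem exists_norm_apply_le_of_isBounded_image_Icc [IsOrderedAddMonoid D] [CompleteSpace D]
    [OrderClosedTopology D]
    (f : D →ₗ[ℝ] F) (hf : ∀ s, Bornology.IsBounded (f '' Icc 0 s)) :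
    ∃ C, 0 ≤ C ∧ ∀ x, 0 ≤ x → ‖f x‖ ≤ C * ‖x‖ := by
  by_contra! hC
  choose u hu0 hu_norm hu_large using fun n : ℕ =>
    exists_nonneg_norm_le_lt_norm_apply f hC (pow_pos one_half_pos n) (n : ℝ)
  have hsum : Summable u := .of_norm_bounded summable_geometric_two hu_norm
  obtain ⟨B, hB⟩ := isBounded_iff_forall_norm_le.1 (hf (∑' n, u n))
  obtain ⟨n, hn⟩ := exists_nat_gt B
  have hun : u n ∈ Icc 0 (∑' n, u n) := ⟨hu0 n, hsum.le_tsum n fun j _ => hu0 j⟩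
  exact (hn.trans (hu_large n)).not_ge (hB _ (mem_image_of_mem f hun))

end BoundedOnCone

section Ando

variable (D) in
def nonnegDiffBall (ρ : ℝ) : Set D :=
  {x | ∃ y z : D, 0 ≤ y ∧ 0 ≤ z ∧ ‖y‖ ≤ ρ ∧ ‖z‖ ≤ ρ ∧ x = y - z}

lemma neg_nonnegDiffBall (ρ : ℝ) : -nonnegDiffBall D ρ = nonnegDiffBall D ρ := by
  refine Subset.antisymm ?_ fun x hx => ?_
  · rintro x ⟨y, z, hy, hz, hyρ, hzρ, hx⟩
    exact ⟨z, y, hz, hy, hzρ, hyρ, by rw [← neg_neg x, hx, neg_sub]⟩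
  · obtain ⟨y, z, hy, hz, hyρ, hzρ, rfl⟩ := hx
    exact ⟨z, y, hz, hy, hzρ, hyρ, by rw [neg_sub]⟩

lemma add_mem_nonnegDiffBall [IsOrderedAddMonoid D] {ρ ρ' : ℝ} {x x' : D}
    (hx : x ∈ nonnegDiffBall D ρ) (hx' : x' ∈ nonnegDiffBall D ρ') :
    x + x' ∈ nonnegDiffBall D (ρ + ρ') := by
  obtain ⟨y, z, hy, hz, hyρ, hzρ, rfl⟩ := hx
  obtain ⟨y', z', hy', hz', hyρ', hzρ', rfl⟩ := hx'
  exact ⟨y + y', z + z', add_nonneg hy hy', add_nonneg hz hz',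
    (norm_add_le _ _).trans (add_le_add hyρ hyρ'), (norm_add_le _ _).trans (add_le_add hzρ hzρ'),
    by abel⟩

lemma smul_mem_nonnegDiffBall [NormedSpace ℝ D] [PosSMulMono ℝ D] {t ρ : ℝ} {x : D}
    (ht : 0 ≤ t) (hx : x ∈ nonnegDiffBall D ρ) : t • x ∈ nonnegDiffBall D (t * ρ) := by
  obtain ⟨y, z, hy, hz, hyρ, hzρ, rfl⟩ := hx
  refine ⟨t • y, t • z, smul_nonneg ht hy, smul_nonneg ht hz, ?_, ?_, smul_sub t y z⟩ <;>
    rw [norm_smul, Real.norm_of_nonneg ht] <;> gcongr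

variable [IsOrderedAddMonoid D] [NormedSpace ℝ D] [PosSMulMono ℝ D]

lemma convex_nonnegDiffBall (ρ : ℝ) : Convex ℝ (nonnegDiffBall D ρ) := by
  intro x hx x' hx' a b ha hb hab
  simpa only [← add_mul, hab, one_mul] using
    add_mem_nonnegDiffBall (smul_mem_nonnegDiffBall ha hx) (smul_mem_nonnegDiffBall hb hx')

theorem exists_ball_subset_closure_nonnegDiffBall [CompleteSpace D]
    (hgen : ∀ x : D, ∃ y z : D, 0 ≤ y ∧ 0 ≤ z ∧ x = y - z) :
    ∃ ρ r : ℝ, 0 < r ∧ ball (0 : D) r ⊆ closure (nonnegDiffBall D ρ) := by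
  have hcover : ⋃ n : ℕ, closure (nonnegDiffBall D n) = univ := by
    refine eq_univ_of_forall fun x => mem_iUnion.2 ?_
    obtain ⟨y, z, hy, hz, rfl⟩ := hgen x
    obtain ⟨n, hn⟩ := exists_nat_ge (max ‖y‖ ‖z‖)
    exact ⟨n, subset_closure
      ⟨y, z, hy, hz, (le_max_left _ _).trans hn, (le_max_right _ _).trans hn, rfl⟩⟩
  obtain ⟨n, x₀, hx₀⟩ := nonempty_interior_of_iUnion_of_closed (fun _ => isClosed_closure) hcover
  have hneg : -x₀ ∈ closure (nonnegDiffBall D n) := by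
    rw [← neg_nonnegDiffBall, ← neg_closure]
    simpa using interior_subset hx₀
  -- `0` is the midpoint of the interior point `x₀` and of `-x₀`
  have h0 : (0 : D) ∈ interior (closure (nonnegDiffBall D n)) := by
    have := (convex_nonnegDiffBall (n : ℝ)).closure.combo_interior_closure_mem_interior hx₀
      (by rwa [closure_closure]) (by norm_num : (0 : ℝ) < 1 / 2) (by norm_num : (0 : ℝ) ≤ 1 / 2)
      (by norm_num)
    rwa [smul_neg, add_neg_cancel] at this
  obtain ⟨r, hr, hball⟩ := Metric.mem_nhds_iff.1 (mem_interior_iff_mem_nhds.1 h0)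
  exact ⟨n, r, hr, hball⟩

lemma exists_hasSum_geometric_smul_nonneg [CompleteSpace D] [OrderClosedTopology D] {ρ : ℝ}
    {y : ℕ → D} (hy : ∀ k, 0 ≤ y k) (hyρ : ∀ k, ‖y k‖ ≤ ρ) :
    ∃ s, HasSum (fun k => (1 / 2 : ℝ) ^ k • y k) s ∧ 0 ≤ s ∧ ‖s‖ ≤ 2 * ρ := by
  have hbound : ∀ k, ‖(1 / 2 : ℝ) ^ k • y k‖ ≤ ρ * (1 / 2) ^ k := fun k => by
    rw [norm_smul, Real.norm_of_nonneg (by positivity), mul_comm]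
    gcongr
    exact hyρ k
  have hgeom := hasSum_geometric_two.mul_left ρ
  refine ⟨_, (Summable.of_norm_bounded hgeom.summable hbound).hasSum,
    tsum_nonneg fun k => smul_nonneg (by positivity) (hy k), ?_⟩
  simpa only [mul_comm ρ] using tsum_of_norm_bounded hgeom hbound

lemma mem_nonnegDiffBall_of_tendsto [CompleteSpace D] [OrderClosedTopology D] {ρ : ℝ}
    {a : ℕ → D} {x : D} (ha : ∀ k, a k ∈ nonnegDiffBall D ρ)
    (hx : Tendsto (fun m => ∑ k ∈ Finset.range m, (1 / 2 : ℝ) ^ k • a k) atTop (𝓝 x)) :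
    x ∈ nonnegDiffBall D (2 * ρ) := by
  choose y z hy hz hyρ hzρ hyz using ha
  obtain ⟨s, hs, hs0, hsρ⟩ := exists_hasSum_geometric_smul_nonneg hy hyρ
  obtain ⟨t, ht, ht0, htρ⟩ := exists_hasSum_geometric_smul_nonneg hz hzρ
  have hst : HasSum (fun k => (1 / 2 : ℝ) ^ k • a k) (s - t) := by
    simpa only [hyz, smul_sub] using hs.sub ht
  exact ⟨s, t, hs0, ht0, hsρ, htρ, tendsto_nhds_unique hx hst.tendsto_sum_nat⟩

theorem ball_subset_nonnegDiffBall_of_subset_closure [CompleteSpace D] [OrderClosedTopology D]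
    {ρ r : ℝ} (h : ball (0 : D) r ⊆ closure (nonnegDiffBall D ρ)) :
    ball (0 : D) r ⊆ nonnegDiffBall D (2 * ρ) := by
  intro x hx
  have hρ : 0 ≤ ρ := by
    obtain ⟨-, y, -, -, -, hyρ, -, -⟩ := closure_nonempty_iff.1 ⟨x, h hx⟩
    exact (norm_nonneg y).trans hyρ
  have hstep : ∀ v : D, ∃ a ∈ nonnegDiffBall D ρ,
      v ∈ ball 0 r → (2 : ℝ) • (v - a) ∈ ball 0 r := by
    intro v
    by_cases hv : v ∈ ball 0 r
    · obtain ⟨a, ha, hva⟩ := Metric.mem_closure_iff.1 (h hv) (r / 2) (by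
        have := Metric.pos_of_mem_ball hv; positivity)
      refine ⟨a, ha, fun _ => ?_⟩
      rw [mem_ball_zero_iff, norm_smul, Real.norm_two, ← dist_eq_norm]
      linarith
    · have h0 : (0 : D) ∈ nonnegDiffBall D ρ :=
        ⟨0, 0, le_rfl, le_rfl, by rwa [norm_zero], by rwa [norm_zero], (sub_zero 0).symm⟩
      exact ⟨0, h0, fun h => absurd h hv⟩
  choose g hg hg_ball using hstep
  set v : ℕ → D := fun m => (fun w => (2 : ℝ) • (w - g w))^[m] x with hv_def
  have hv_succ : ∀ m, v (m + 1) = (2 : ℝ) • (v m - g (v m)) := fun m =>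
    Function.iterate_succ_apply' _ m x
  have hv : ∀ m, v m ∈ ball 0 r := fun m => by
    induction m with
    | zero => exact hx
    | succ m ih => rw [hv_succ]; exact hg_ball _ ih
  have hpartial : ∀ m,
      ∑ k ∈ Finset.range m, (1 / 2 : ℝ) ^ k • g (v k) = x - (1 / 2 : ℝ) ^ m • v m := by
    intro m
    induction m with
    | zero => simp [hv_def]
    | succ m ih => rw [Finset.sum_range_succ, ih, hv_succ]; module
  refine mem_nonnegDiffBall_of_tendsto (fun k => hg (v k)) ?_
  simp_rw [hpartial]
  have hrem : Tendsto (fun m => (1 / 2 : ℝ) ^ m • v m) atTop (𝓝 0) := by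
    refine squeeze_zero_norm (a := fun m => (1 / 2 : ℝ) ^ m * r) (fun m => ?_) ?_
    · rw [norm_smul, Real.norm_of_nonneg (by positivity)]
      exact mul_le_mul_of_nonneg_left (mem_ball_zero_iff.1 (hv m)).le (by positivity)
    · simpa using (tendsto_pow_atTop_nhds_zero_of_lt_one (r := (1 / 2 : ℝ)) (by norm_num)
        (by norm_num)).mul_const r
  simpa using hrem.const_sub x

theorem exists_mem_nonnegDiffBall_mul_norm [CompleteSpace D] [OrderClosedTopology D]
    (hgen : ∀ x : D, ∃ y z : D, 0 ≤ y ∧ 0 ≤ z ∧ x = y - z) :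
    ∃ M : ℝ, ∀ x : D, x ∈ nonnegDiffBall D (M * ‖x‖) := by
  obtain ⟨ρ, r, hr, hball⟩ := exists_ball_subset_closure_nonnegDiffBall hgen
  refine ⟨4 * ρ / r, fun x => ?_⟩
  rcases eq_or_ne x 0 with rfl | hx
  · exact ⟨0, 0, le_rfl, le_rfl, by simp, by simp, by simp⟩
  have hxpos : 0 < ‖x‖ := norm_pos_iff.2 hx
  set t := r / (2 * ‖x‖) with ht_def
  have ht : 0 < t := by positivity
  have htx : t • x ∈ ball (0 : D) r := by
    rw [mem_ball_zero_iff, norm_smul, Real.norm_of_nonneg ht.le, ht_def,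
      div_mul_eq_mul_div, mul_div_mul_right _ _ hxpos.ne']
    linarith
  have := smul_mem_nonnegDiffBall (inv_nonneg.2 ht.le)
    (ball_subset_nonnegDiffBall_of_subset_closure hball htx)
  rwa [inv_smul_smul₀ ht.ne', show t⁻¹ * (2 * ρ) = 4 * ρ / r * ‖x‖ by
    rw [ht_def, inv_div]; field_simp; ring] at this

end Ando

end OrderedBanachSpace

theorem orderBounded_linear_continuous_into_normal_cone_general
    {D₁ D₂ : Type*}
    [NormedAddCommGroup D₁] [NormedSpace ℝ D₁] [CompleteSpace D₁]
    [PartialOrder D₁] [CovariantClass D₁ D₁ (· + ·) (· ≤ ·)]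
    [NormedAddCommGroup D₂] [NormedSpace ℝ D₂]
    [PartialOrder D₂] [CovariantClass D₂ D₂ (· + ·) (· ≤ ·)]
    (hsmul₁ : ∀ (c : ℝ) (x : D₁), 0 ≤ c → 0 ≤ x → 0 ≤ c • x)
    (hclosed₁ : IsClosed {x : D₁ | 0 ≤ x})
    (hgen₁ : ∀ x : D₁, ∃ y z : D₁, 0 ≤ y ∧ 0 ≤ z ∧ x = y - z)
    (hnormal₂ : ∃ c : ℝ, 0 < c ∧ ∀ x y : D₂, 0 ≤ x → x ≤ y → ‖x‖ ≤ c * ‖y‖)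
    (T : D₁ →ₗ[ℝ] D₂)
    (hob : ∀ u v : D₁, ∃ p q : D₂, ∀ x ∈ Set.Icc u v, T x ∈ Set.Icc p q) :
    Continuous T := by
  have : IsOrderedAddMonoid D₁ := { add_le_add_left := fun _ _ h c => add_le_add_left h c }
  have : IsOrderedAddMonoid D₂ := { add_le_add_left := fun _ _ h c => add_le_add_left h c }
  have : PosSMulMono ℝ D₁ := .of_smul_nonneg fun c hc x hx => hsmul₁ c x hc hx
  have : OrderClosedTopology D₁ := .of_isClosed_nonneg hclosed₁
  obtain ⟨c, -, hc⟩ := hnormal₂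
  obtain ⟨C, hC0, hC⟩ := exists_norm_apply_le_of_isBounded_image_Icc T fun s => by
    obtain ⟨p, q, hpq⟩ := hob 0 s
    exact (isBounded_Icc_of_normal_cone hc p q).subset (image_subset_iff.2 hpq)
  obtain ⟨M, hM⟩ := exists_mem_nonnegDiffBall_mul_norm hgen₁
  refine AddMonoidHomClass.continuous_of_bound T (2 * C * M) fun x => ?_
  obtain ⟨y, z, hy, hz, hyM, hzM, rfl⟩ := hM x
  calc ‖T (y - z)‖ ≤ ‖T y‖ + ‖T z‖ := by rw [map_sub]; exact norm_sub_le _ _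
    _ ≤ C * ‖y‖ + C * ‖z‖ := add_le_add (hC y hy) (hC z hz)
    _ ≤ C * (M * ‖y - z‖) + C * (M * ‖y - z‖) := by gcongr
    _ = 2 * C * M * ‖y - z‖ := by ring

/-- An order bounded linear map from an ordered Banach space with closed generating cone
to a normed ordered vector space with a normal cone is continuous. -/
theorem orderBounded_linear_continuous_into_normal_cone
    {D₁ D₂ : Type*}
    [NormedAddCommGroup D₁] [NormedSpace ℝ D₁] [CompleteSpace D₁]
    [PartialOrder D₁] [CovariantClass D₁ D₁ (· + ·) (· ≤ ·)]
    [NormedAddCommGroup D₂] [NormedSpace ℝ D₂]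
    [PartialOrder D₂] [CovariantClass D₂ D₂ (· + ·) (· ≤ ·)]
    (hsmul₁ : ∀ (c : ℝ) (x : D₁), 0 ≤ c → 0 ≤ x → 0 ≤ c • x)
    (hsmul₂ : ∀ (c : ℝ) (x : D₂), 0 ≤ c → 0 ≤ x → 0 ≤ c • x)
    (hclosed₁ : IsClosed {x : D₁ | 0 ≤ x})
    (hgen₁ : ∀ x : D₁, ∃ y z : D₁, 0 ≤ y ∧ 0 ≤ z ∧ x = y - z)
    (hnormal₂ : ∃ c : ℝ, 0 < c ∧ ∀ x y : D₂, 0 ≤ x → x ≤ y → ‖x‖ ≤ c * ‖y‖)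
    (T : D₁ →ₗ[ℝ] D₂)
    (hob : ∀ u v : D₁, ∃ p q : D₂, ∀ x ∈ Set.Icc u v, T x ∈ Set.Icc p q) :
    Continuous T :=
  orderBounded_linear_continuous_into_normal_cone_general hsmul₁ hclosed₁ hgen₁ hnormal₂ T hob
end
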